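/- For every real (n+2)×(n+2) matrix g, every t ∈ ℝ, every Y ∈ ℝⁿ and every real (m+2)×(m+2) matrix h: (a) q( diag(h, I_{n−m}) · g ) = q(g), where diag(h, I_{n−m}) denotes the block-diagonal (n+2)×(n+2) matrix with blocks h and the identity matrix of size n−m; (b) q( g · exp(tH) · exp(Ȳ) ) = e^{2t} q(g), where exp denotes the matrix exponential. -/

import Mathlib

noncomputable section

/-- The function `q(g) = ¼ ∑_{i=m+3}^{n+2} (g_{i,1} + g_{i,2})²` (matrix indices are
`0`-based in Lean, so the rows are those with index `≥ m+2` and the columns are `0`, `1`). -/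
def qform (n m : ℕ) (g : Matrix (Fin (n+2)) (Fin (n+2)) ℝ) : ℝ :=
  (1/4) * ∑ i ∈ Finset.univ.filter (fun i : Fin (n+2) => m+2 ≤ (i : ℕ)),
    (g i 0 + g i 1)^2

/-- The matrix `H` with `H_{1,2} = H_{2,1} = 1` and all other entries `0` (1-based). -/
def Hmat (n : ℕ) : Matrix (Fin (n+2)) (Fin (n+2)) ℝ :=
  fun i j => if ((i : ℕ) = 0 ∧ (j : ℕ) = 1) ∨ ((i : ℕ) = 1 ∧ (j : ℕ) = 0) then 1 else 0

/-- The matrix `Ȳ` associated to `Y ∈ ℝⁿ`: `Ȳ_{1,2+j} = Ȳ_{2,2+j} = Y_j`,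
`Ȳ_{2+j,1} = Y_j`, `Ȳ_{2+j,2} = -Y_j` (1-based), all other entries `0`. -/
def Ybar (n : ℕ) (Y : Fin n → ℝ) : Matrix (Fin (n+2)) (Fin (n+2)) ℝ :=
  fun i j =>
    if h1 : ((i : ℕ) = 0 ∨ (i : ℕ) = 1) ∧ 2 ≤ (j : ℕ) then
      Y ⟨(j : ℕ) - 2, by have := j.isLt; omega⟩
    else if h2 : 2 ≤ (i : ℕ) ∧ (j : ℕ) = 0 then
      Y ⟨(i : ℕ) - 2, by have := i.isLt; omega⟩
    else if h3 : 2 ≤ (i : ℕ) ∧ (j : ℕ) = 1 then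
      -(Y ⟨(i : ℕ) - 2, by have := i.isLt; omega⟩)
    else 0

/-- The block diagonal matrix `diag(h, I_{n-m})` of size `(n+2) × (n+2)` with upper left
block `h` of size `(m+2) × (m+2)`. -/
def blockEmbed (n m : ℕ) (h : Matrix (Fin (m+2)) (Fin (m+2)) ℝ) :
    Matrix (Fin (n+2)) (Fin (n+2)) ℝ :=
  fun i j =>
    if hi : (i : ℕ) < m+2 then
      if hj : (j : ℕ) < m+2 then h ⟨(i : ℕ), hi⟩ ⟨(j : ℕ), hj⟩ else 0
    else if (i : ℕ) = (j : ℕ) then 1 else 0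

/-!
`q(g)` only sees the rows `i ≥ m+3` of the vector `g (e₁ + e₂)`. Left multiplication by
`diag(h, I)` does not change these rows of `g`. On the right, `e₁ + e₂` is an eigenvector of `H`
with eigenvalue `1` and of `Ȳ` with eigenvalue `0`, hence of `exp(tH)` with eigenvalue `eᵗ` and
of `exp(Ȳ)` with eigenvalue `1`; so `g exp(tH) exp(Ȳ) (e₁ + e₂) = eᵗ g (e₁ + e₂)`.
-/

open Matrix NormedSpace

open scoped Norms.Operator in
theorem Matrix.exp_mulVec_of_mulVec_eq_smul {𝕂 ι : Type*} [RCLike 𝕂] [Fintype ι] [DecidableEq ι]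
    {A : Matrix ι ι 𝕂} {v : ι → 𝕂} {c : 𝕂} (h : A *ᵥ v = c • v) :
    exp A *ᵥ v = exp c • v := by
  have hpow : ∀ k : ℕ, A ^ k *ᵥ v = c ^ k • v := by
    intro k
    induction k with
    | zero => simp
    | succ k ih => rw [pow_succ, pow_succ, ← mulVec_mulVec, h, mulVec_smul, ih, smul_smul, mul_comm]
  have hA := (exp_series_hasSum_exp' (𝕂 := 𝕂) A).map (mulVec.addMonoidHomLeft v)
    (continuous_id.matrix_mulVec continuous_const)
  have hc := (exp_series_hasSum_exp' (𝕂 := 𝕂) c).smul_const v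
  refine hA.unique ?_
  convert hc using 2 with k
  simp [mulVec.addMonoidHomLeft, smul_mulVec, hpow, smul_smul]

/-- The paper's `e₁ + e₂` (indices are `0`-based here). -/
def v₀₁ (n : ℕ) : Fin (n+2) → ℝ := Pi.single 0 1 + Pi.single 1 1

lemma mulVec_v₀₁_apply {n : ℕ} (M : Matrix (Fin (n+2)) (Fin (n+2)) ℝ) (i : Fin (n+2)) :
    (M *ᵥ v₀₁ n) i = M i 0 + M i 1 := by
  simp [v₀₁, mulVec_add]

lemma Hmat_mulVec_v₀₁ (n : ℕ) : Hmat n *ᵥ v₀₁ n = v₀₁ n := by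
  ext i
  rw [mulVec_v₀₁_apply]
  rcases i with ⟨_ | _ | i, hi⟩ <;> simp [Hmat, v₀₁, Fin.ext_iff]

lemma Ybar_mulVec_v₀₁ (n : ℕ) (Y : Fin n → ℝ) : Ybar n Y *ᵥ v₀₁ n = 0 := by
  ext i
  rw [mulVec_v₀₁_apply]
  rcases i with ⟨_ | _ | i, hi⟩ <;> simp [Ybar]

lemma exp_smul_Hmat_mulVec_v₀₁ (n : ℕ) (t : ℝ) :
    exp (t • Hmat n) *ᵥ v₀₁ n = Real.exp t • v₀₁ n := by
  rw [Real.exp_eq_exp_ℝ]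
  exact exp_mulVec_of_mulVec_eq_smul (by rw [smul_mulVec, Hmat_mulVec_v₀₁])

lemma exp_Ybar_mulVec_v₀₁ (n : ℕ) (Y : Fin n → ℝ) : exp (Ybar n Y) *ᵥ v₀₁ n = v₀₁ n := by
  simpa using exp_mulVec_of_mulVec_eq_smul (A := Ybar n Y) (c := (0 : ℝ))
    (by rw [Ybar_mulVec_v₀₁, zero_smul])

lemma qform_eq_sq_mul {n m : ℕ} {g g' : Matrix (Fin (n+2)) (Fin (n+2)) ℝ} (a : ℝ)
    (hg : ∀ i : Fin (n+2), m + 2 ≤ (i : ℕ) → g' i 0 + g' i 1 = a * (g i 0 + g i 1)) :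
    qform n m g' = a ^ 2 * qform n m g := by
  rw [qform, qform, mul_left_comm]
  congr 1
  rw [Finset.mul_sum]
  refine Finset.sum_congr rfl fun i hi => ?_
  rw [hg i (Finset.mem_filter.mp hi).2, mul_pow]

lemma blockEmbed_mul_row_of_le {n m : ℕ} (h : Matrix (Fin (m+2)) (Fin (m+2)) ℝ)
    (g : Matrix (Fin (n+2)) (Fin (n+2)) ℝ) {i : Fin (n+2)} (hi : m + 2 ≤ (i : ℕ)) :
    (blockEmbed n m h * g) i = g i := by
  have hrow : blockEmbed n m h i = Pi.single i 1 := by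
    ext k
    simp [blockEmbed, Pi.single_apply, Fin.ext_iff, eq_comm, hi.not_gt]
  rw [mul_apply_eq_vecMul, hrow, single_one_vecMul, row_def]

theorem qformInvariance_general (n m : ℕ)
    (g : Matrix (Fin (n+2)) (Fin (n+2)) ℝ) (t : ℝ) (Y : Fin n → ℝ)
    (h : Matrix (Fin (m+2)) (Fin (m+2)) ℝ) :
    qform n m (blockEmbed n m h * g) = qform n m g ∧
    qform n m (g * NormedSpace.exp (t • Hmat n) * NormedSpace.exp (Ybar n Y))
      = Real.exp (2*t) * qform n m g := by
  constructor
  · simpa using qform_eq_sq_mul 1 fun i hi => by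
      rw [blockEmbed_mul_row_of_le h g hi, one_mul]
  · rw [show 2 * t = t + t by ring, Real.exp_add, ← sq]
    refine qform_eq_sq_mul _ fun i _ => ?_
    rw [← mulVec_v₀₁_apply, ← mulVec_v₀₁_apply, ← mulVec_mulVec, ← mulVec_mulVec,
      exp_Ybar_mulVec_v₀₁, exp_smul_Hmat_mulVec_v₀₁, mulVec_smul, Pi.smul_apply, smul_eq_mul]

/-- (a) `q(diag(h, I_{n-m})·g) = q(g)`;
(b) `q(g·exp(tH)·exp(Ȳ)) = e^{2t} q(g)`. -/
theorem qformInvariance (n m : ℕ) (hn : 1 ≤ n) (hm : m < n)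
    (g : Matrix (Fin (n+2)) (Fin (n+2)) ℝ) (t : ℝ) (Y : Fin n → ℝ)
    (h : Matrix (Fin (m+2)) (Fin (m+2)) ℝ) :
    qform n m (blockEmbed n m h * g) = qform n m g ∧
    qform n m (g * NormedSpace.exp (t • Hmat n) * NormedSpace.exp (Ybar n Y))
      = Real.exp (2*t) * qform n m g :=
  qformInvariance_general n m g t Y h
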